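/- The symmetric 5×5 integer matrix C = [[3,0,−1,0,0],[0,2,0,−1,−1],[−1,0,2,−1,0],[0,−1,−1,2,−1],[0,−1,0,−1,3]] (the extended generalized Cartan matrix attached to the group G_8 ≅ A_5 ⊂ SL(3,ℂ)) is positive semidefinite, and the vector d = (1,4,3,5,3)ᵀ of dimensions of the irreducible representations of A_5 satisfies C·d = 0. -/

import Mathlib

/-!
A symmetric matrix `A` with nonpositive off-diagonal entries that admits a positive vector `d`
with `A d ≥ 0` is positive semidefinite: substituting `x = d * y`,
`xᵀ A x = ∑ᵢ (A d)ᵢ dᵢ yᵢ² - ½ ∑ᵢⱼ Aᵢⱼ dᵢ dⱼ (yᵢ - yⱼ)²`,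
and every term on the right is nonnegative. For the Cartan matrix of `G₈` the dimension vector of
`A₅` is such a `d`, lying even in the kernel.
-/

noncomputable section

/-- The extended generalized Cartan matrix attached to `G₈ ≅ A₅ ⊂ SL(3,ℂ)`. -/
def CG8 : Matrix (Fin 5) (Fin 5) ℝ :=
  !![3, 0, -1, 0, 0;
     0, 2, 0, -1, -1;
     -1, 0, 2, -1, 0;
     0, -1, -1, 2, -1;
     0, -1, 0, -1, 3]

/-- The vector of dimensions of the irreducible representations of `A₅`. -/
def dA5 : Fin 5 → ℝ := ![1, 4, 3, 5, 3]

namespace Matrix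

open Finset

variable {n : Type*} [Fintype n]

theorem dotProduct_mulVec_mul_eq_sub_sum_sq {A : Matrix n n ℝ} (hA : A.IsSymm) (d y : n → ℝ) :
    (d * y) ⬝ᵥ A *ᵥ (d * y) =
      ∑ i, (A *ᵥ d) i * d i * y i ^ 2 - (∑ i, ∑ j, A i j * d i * d j * (y i - y j) ^ 2) / 2 := by
  have hquad : (d * y) ⬝ᵥ A *ᵥ (d * y) = ∑ i, ∑ j, A i j * d i * d j * (y i * y j) := by
    simp only [mulVec, dotProduct, mul_sum, Pi.mul_apply]
    exact sum_congr rfl fun i _ => sum_congr rfl fun j _ => by ring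
  have hrow : ∑ i, (A *ᵥ d) i * d i * y i ^ 2 = ∑ i, ∑ j, A i j * d i * d j * y i ^ 2 := by
    simp only [mulVec, dotProduct, sum_mul]
    exact sum_congr rfl fun i _ => sum_congr rfl fun j _ => by ring
  have hcol : ∑ i, ∑ j, A i j * d i * d j * y j ^ 2 = ∑ i, ∑ j, A i j * d i * d j * y i ^ 2 := by
    rw [sum_comm]
    exact sum_congr rfl fun i _ => sum_congr rfl fun j _ => by rw [hA.apply i j]; ring
  have hexpand : ∑ i, ∑ j, A i j * d i * d j * (y i - y j) ^ 2 =
      ∑ i, ∑ j, A i j * d i * d j * y i ^ 2 - 2 * ∑ i, ∑ j, A i j * d i * d j * (y i * y j) +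
        ∑ i, ∑ j, A i j * d i * d j * y j ^ 2 := by
    simp only [mul_sum, ← sum_sub_distrib, ← sum_add_distrib]
    exact sum_congr rfl fun i _ => sum_congr rfl fun j _ => by ring
  rw [hquad, hrow, hexpand, hcol]
  ring

theorem posSemidef_of_offDiag_nonpos_of_mulVec_nonneg {A : Matrix n n ℝ} (hA : A.IsSymm)
    (hoff : ∀ i j, i ≠ j → A i j ≤ 0) {d : n → ℝ} (hd : ∀ i, 0 < d i) (hAd : 0 ≤ A *ᵥ d) :
    A.PosSemidef := by
  refine posSemidef_iff_dotProduct_mulVec.2 ⟨isHermitian_iff_isSymm.2 hA, fun x => ?_⟩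
  have hx : x = d * (x / d) := funext fun i => (mul_div_cancel₀ _ (hd i).ne').symm
  rw [star_trivial, hx, dotProduct_mulVec_mul_eq_sub_sum_sq hA]
  have hdiag : 0 ≤ ∑ i, (A *ᵥ d) i * d i * (x / d) i ^ 2 :=
    sum_nonneg fun i _ => mul_nonneg (mul_nonneg (hAd i) (hd i).le) (sq_nonneg _)
  have hoffDiag : ∑ i, ∑ j, A i j * d i * d j * ((x / d) i - (x / d) j) ^ 2 ≤ 0 := by
    refine sum_nonpos fun i _ => sum_nonpos fun j _ => ?_
    rcases eq_or_ne i j with rfl | hij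
    · simp
    · exact mul_nonpos_of_nonpos_of_nonneg
        (mul_nonpos_of_nonpos_of_nonneg (mul_nonpos_of_nonpos_of_nonneg (hoff i j hij)
          (hd i).le) (hd j).le) (sq_nonneg _)
  linarith

end Matrix

/-- The extended generalized Cartan matrix of `G₈ ≅ A₅` is symmetric positive semidefinite,
and the dimension vector `(1,4,3,5,3)ᵀ` lies in its kernel. -/
theorem CG8_posSemidef_and_kernel :
    CG8.PosSemidef ∧ CG8.mulVec dA5 = 0 := by
  have hker : CG8.mulVec dA5 = 0 := by
    ext i
    fin_cases i <;> simp [CG8, dA5, Matrix.mulVec, dotProduct, Fin.sum_univ_five] <;> norm_num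
  have hsymm : CG8.IsSymm := Matrix.IsSymm.ext fun i j => by
    fin_cases i <;> fin_cases j <;> simp [CG8]
  have hoff : ∀ i j, i ≠ j → CG8 i j ≤ 0 := by
    intro i j hij
    fin_cases i <;> fin_cases j <;> simp [CG8] at hij ⊢
  have hpos : ∀ i, 0 < dA5 i := by
    intro i
    fin_cases i <;> simp [dA5]
  exact ⟨Matrix.posSemidef_of_offDiag_nonpos_of_mulVec_nonneg hsymm hoff hpos hker.ge, hker⟩

end
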